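/- arXiv:2209.10857 — 4 statements merged into one kernel-verified Lean document; each statement's English description precedes it below -/
import Mathlib

section
/- Let U = ∏_{v∈Σ_K} U_v ⊆ A_K be a nonempty basic open set of A_K, i.e. each U_v ⊆ K_v is open and nonempty and U_v = O_{K,v} for all but finitely many v. Then F := {v ∈ Σ_K : 0 ∉ U_v} is finite and Ξ(U) ∩ 2^{Σ_K} = U_F := {T ⊆ Σ_K : T ∩ F = ∅}. -/
open NumberField IsDedekindDomain

noncomputable section

variable (K : Type*) [Field K] [NumberField K]

/-- The set of places of the number field `K`: infinite places plus finite places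
(nonzero primes of the ring of integers). -/
abbrev Place := InfinitePlace K ⊕ HeightOneSpectrum (𝓞 K)

/-- The local completion of `K` at a place. -/
def LocalField : Place K → Type _
  | .inl w => w.Completion
  | .inr v => v.adicCompletion K

instance : ∀ v : Place K, TopologicalSpace (LocalField K v)
  | .inl w => inferInstanceAs (TopologicalSpace w.Completion)
  | .inr v => inferInstanceAs (TopologicalSpace (v.adicCompletion K))

instance : ∀ v : Place K, Zero (LocalField K v)
  | .inl w => inferInstanceAs (Zero w.Completion)
  | .inr v => inferInstanceAs (Zero (v.adicCompletion K))

/-- The `v`-coordinate of an adele. -/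
def coord (a : AdeleRing (𝓞 K) K) : ∀ v : Place K, LocalField K v
  | .inl w => a.1 w
  | .inr v => a.2 v

/-- The local ring of integers `O_{K,v}`: for a finite place, the ring of integers of
`K_v`; for an infinite place, by convention, all of `K_v`. -/
def localIntegers : ∀ v : Place K, Set (LocalField K v)
  | .inl _ => Set.univ
  | .inr v => (v.adicCompletionIntegers K : Set (v.adicCompletion K))

/-- The zero set `Z(a)` of an adele: the set of places where the component of `a` vanishes. -/
def zeroSet (a : AdeleRing (𝓞 K) K) : Set (Place K) := {v | coord K a v = 0}

open scoped Classical in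
/-- The normalized absolute value at a place `v`, as a function on the local field:
for a real place the usual absolute value, for a complex place its square, and for a
finite place `N(v)^(-val(x))`. -/
def placeAbs : ∀ v : Place K, LocalField K v → ℝ
  | .inl w => fun x : w.Completion => if w.IsReal then ‖x‖ else ‖x‖ ^ 2
  | .inr v => fun x : v.adicCompletion K =>
      if hx : Valued.v x = (0 : WithZero (Multiplicative ℤ)) then 0
      else (Nat.card (𝓞 K ⧸ v.asIdeal) : ℝ) ^ Multiplicative.toAdd (WithZero.unzero hx)

/-- The normalized absolute value `|a|_v` of an adele at a place. -/
def adeleAbs (v : Place K) (a : AdeleRing (𝓞 K) K) : ℝ := placeAbs K v (coord K a v)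

/-- The adelic norm `‖a‖ = ∏_v |a|_v`, defined as the infimum of the partial products over
finite sets of places containing every place where `|a|_v > 1`. -/
def adelicNorm (a : AdeleRing (𝓞 K) K) : ℝ :=
  sInf {r : ℝ | ∃ F : Finset (Place K),
    (∀ v : Place K, 1 < adeleAbs K v a → v ∈ F) ∧ r = ∏ v ∈ F, adeleAbs K v a}

/-- The subgroup of principal ideles. -/
def principalIdeles : Subgroup (AdeleRing (𝓞 K) K)ˣ :=
  (Units.map (algebraMap K (AdeleRing (𝓞 K) K)).toMonoidHom).range

/-- The idele class group `C_K = A_K^*/K^*`, with the quotient of the idelic topology.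
(The idelic topology on `A_K^*` is the topology of the unit group `(A_K)ˣ`, i.e. the
subspace topology under `a ↦ (a, a⁻¹)`.) -/
abbrev IdeleClassGroup := (AdeleRing (𝓞 K) K)ˣ ⧸ principalIdeles K

/-- The orbit `K^*·a` of an adele under the multiplication action of `K^*`. -/
def mulOrbit (a : AdeleRing (𝓞 K) K) : Set (AdeleRing (𝓞 K) K) :=
  {b | ∃ x : Kˣ, algebraMap K (AdeleRing (𝓞 K) K) (x : K) * a = b}

open scoped Classical in
/-- The map `Ξ : A_K → 2^{Σ_K} ⊔ C_K`. -/
def Xi (a : AdeleRing (𝓞 K) K) : Set (Place K) ⊕ IdeleClassGroup K :=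
  if h : IsUnit a then Sum.inr (QuotientGroup.mk h.unit)
  else Sum.inl (zeroSet K a)

/-- The quasi-orbit topology on `2^{Σ_K} ⊔ C_K`: the final topology induced by `Ξ`. -/
def qoTop : TopologicalSpace (Set (Place K) ⊕ IdeleClassGroup K) :=
  TopologicalSpace.coinduced (Xi K) inferInstance

/-- The power-cofinite topology on `2^{Σ_K}`, generated by the sets
`U_F = {T : T ∩ F = ∅}` for finite `F ⊆ Σ_K`. -/
def pcTop : TopologicalSpace (Set (Place K)) :=
  TopologicalSpace.generateFrom
    {S | ∃ F : Finset (Place K), S = {T : Set (Place K) | ∀ v ∈ F, v ∉ T}}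

/-- The norm on the idele class group (defined via representatives; by the product
formula it does not depend on the choice of representative). -/
def classNorm (c : IdeleClassGroup K) : ℝ := adelicNorm K (Quotient.out c : (AdeleRing (𝓞 K) K)ˣ)


/-!
Since `0 ∈ O_{K,v}`, the places with `0 ∉ U_v` are among the finitely many with
`U_v ≠ O_{K,v}`, and the zero set of any `a ∈ U` avoids them. Conversely, for `T` avoiding
them put `a_v = 0` on `T` and pick `a_v ∈ U_v ∖ {0}` off `T`, which is possible because `0` is
not isolated in `K_v`. Choosing `a_v` in the maximal ideal wherever `U_v = O_{K,v}` makes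
`|a_v|_v ≠ 1` at infinitely many places, so `a` is not an idele even when `T = ∅`, and
`Ξ(a) = Z(a) = T`.
-/

open IsDedekindDomain.HeightOneSpectrum Topology Filter

variable {K}

theorem IsOpen.exists_mem_eq_iff_and_mem {X : Type*} [TopologicalSpace X] {a : X}
    [(𝓝[≠] a).NeBot] {U B : Set X} (hU : IsOpen U) (hne : U.Nonempty) (hB : B ∈ 𝓝 a)
    {p : Prop} (hp : p → a ∈ U) : ∃ x ∈ U, (x = a ↔ p) ∧ (a ∈ U → x ∈ B) := by
  by_cases ha : a ∈ U
  · by_cases h : p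
    · exact ⟨a, ha, iff_of_true rfl h, fun _ => mem_of_mem_nhds hB⟩
    · have hUB : ∀ᶠ x in 𝓝[≠] a, x ∈ U ∩ B ∧ x ≠ a :=
        (eventually_nhdsWithin_of_eventually_nhds (inter_mem (hU.mem_nhds ha) hB)).and
          self_mem_nhdsWithin
      obtain ⟨x, ⟨hxU, hxB⟩, hxa⟩ := hUB.exists
      exact ⟨x, hxU, iff_of_false hxa h, fun _ => hxB⟩
  · obtain ⟨x, hx⟩ := hne
    exact ⟨x, hx, iff_of_false (ne_of_mem_of_not_mem hx ha) (mt hp ha), fun h => absurd h ha⟩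

theorem NumberField.InfinitePlace.Completion.norm_two {F : Type*} [Field F]
    (w : InfinitePlace F) : ‖(2 : w.Completion)‖ = 2 := by
  rw [← (InfinitePlace.Completion.isometry_extensionEmbedding w).norm_map_of_map_zero
    (map_zero _), map_ofNat]
  simp

instance LocalField.nhdsNE_zero_neBot : ∀ v : Place K, (𝓝[≠] (0 : LocalField K v)).NeBot
  | .inl w =>
    have h2 := InfinitePlace.Completion.norm_two w
    let _ : NontriviallyNormedField w.Completion :=
      .ofNormNeOne ⟨2, norm_ne_zero_iff.mp (by norm_num [h2]), by norm_num [h2]⟩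
    NormedField.nhdsNE_neBot (0 : w.Completion)
  | .inr w =>
    let _ : NontriviallyNormedField (w.adicCompletion K) :=
      Valued.toNontriviallyNormedField _ (WithZero (Multiplicative ℤ))
    NormedField.nhdsNE_neBot (0 : w.adicCompletion K)

theorem IsDedekindDomain.HeightOneSpectrum.setOf_valued_lt_one_mem_nhds
    (w : HeightOneSpectrum (𝓞 K)) : {x : w.adicCompletion K | Valued.v x < 1} ∈ 𝓝 0 := by
  simp_rw [← Valued.toNormedField.norm_lt_one_iff]
  exact (isOpen_lt continuous_norm continuous_const).mem_nhds (by simp)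

theorem zero_mem_localIntegers : ∀ v : Place K, (0 : LocalField K v) ∈ localIntegers K v
  | .inl _ => Set.mem_univ _
  | .inr w => (w.adicCompletionIntegers K).zero_mem

theorem Xi_eq_inl_iff {a : AdeleRing (𝓞 K) K} {T : Set (Place K)} :
    Xi K a = Sum.inl T ↔ ¬IsUnit a ∧ zeroSet K a = T := by
  unfold Xi
  split_ifs with ha <;> simp [ha]

instance NumberField.infinite_heightOneSpectrum : Infinite (HeightOneSpectrum (𝓞 K)) := by
  have lies_over : ∀ p : Nat.Primes, ∃ v : HeightOneSpectrum (𝓞 K),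
      v.asIdeal.comap (algebraMap ℤ (𝓞 K)) = Ideal.span {((p : ℕ) : ℤ)} := by
    intro p
    have hp : Prime ((p : ℕ) : ℤ) := Nat.prime_iff_prime_int.mp p.2
    have : (Ideal.span {((p : ℕ) : ℤ)}).IsMaximal :=
      ((Ideal.span_singleton_prime hp.ne_zero).mpr hp).isMaximal (by simpa using hp.ne_zero)
    obtain ⟨Q, hQ, hQp⟩ := Ideal.exists_maximal_ideal_liesOver_of_isIntegral (S := 𝓞 K)
      (Ideal.span {((p : ℕ) : ℤ)})
    refine ⟨⟨Q, hQ.isPrime, ?_⟩, hQp.over.symm⟩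
    rintro rfl
    exact hp.ne_zero (Ideal.span_singleton_eq_bot.mp (hQp.over.trans (Ideal.under_bot ℤ (𝓞 K))))
  choose v hv using lies_over
  refine Infinite.of_injective v fun p q hpq => ?_
  have := Ideal.span_singleton_eq_span_singleton.mp ((hv p).symm.trans (hpq ▸ hv q))
  exact Nat.Primes.coe_nat_injective (by simpa [Int.associated_iff_natAbs] using this)

theorem AdeleRing.not_isUnit_of_infinite_setOf_valued_ne_one {a : AdeleRing (𝓞 K) K}
    (ha : {w | Valued.v (a.2 w) ≠ 1}.Infinite) : ¬IsUnit a := fun hunit =>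
  ha (eventually_cofinite.mp (FiniteAdeleRing.isUnit_iff.mp (hunit.map (RingHom.snd _ _))).2)

theorem exists_adele_mem_zeroSet_eq {U : ∀ v : Place K, Set (LocalField K v)}
    (hopen : ∀ v, IsOpen (U v)) (hne : ∀ v, (U v).Nonempty)
    (hfin : {v : Place K | U v ≠ localIntegers K v}.Finite) {T : Set (Place K)}
    (hT : ∀ v ∈ T, 0 ∈ U v) :
    ∃ a : AdeleRing (𝓞 K) K, (∀ v, coord K a v ∈ U v) ∧ zeroSet K a = T ∧
      ∀ w, U (.inr w) = localIntegers K (.inr w) → Valued.v (a.2 w) < 1 := by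
  choose x_inf hx_inf using fun w : InfinitePlace K =>
    (hopen (.inl w)).exists_mem_eq_iff_and_mem (hne _) univ_mem (hT (.inl w))
  choose x_fin hx_fin using fun w : HeightOneSpectrum (𝓞 K) =>
    -- `a` is pinned in `LocalField K (.inr w)`, where the `NeBot` instance lives
    IsOpen.exists_mem_eq_iff_and_mem (a := (0 : LocalField K (.inr w))) (hopen _) (hne _)
      (setOf_valued_lt_one_mem_nhds w) (hT _)
  have x_fin_integral : ∀ᶠ w in cofinite, x_fin w ∈ w.adicCompletionIntegers K :=
    (hfin.preimage Sum.inr_injective.injOn).subset fun w hw heq =>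
      hw (show x_fin w ∈ localIntegers K (.inr w) from heq ▸ (hx_fin w).1)
  refine ⟨(x_inf, ⟨x_fin, x_fin_integral⟩), fun v => ?_, Set.ext fun v => ?_,
    fun w hw => (hx_fin w).2.2 (hw ▸ zero_mem_localIntegers _)⟩
  · cases v with
    | inl w => exact (hx_inf w).1
    | inr w => exact (hx_fin w).1
  · cases v with
    | inl w => exact (hx_inf w).2.1
    | inr w => exact (hx_fin w).2.1

/-- Let `U = ∏_v U_v` be a nonempty basic open set of `A_K` (each `U_v ⊆ K_v` open and
nonempty, and `U_v = O_{K,v}` for all but finitely many `v`). Then `F = {v : 0 ∉ U_v}` is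
finite and `Ξ(U) ∩ 2^{Σ_K} = U_F = {T ⊆ Σ_K : T ∩ F = ∅}`. -/
theorem xi_image_basicOpen_inter_powerSet (U : ∀ v : Place K, Set (LocalField K v))
    (hopen : ∀ v : Place K, IsOpen (U v)) (hne : ∀ v : Place K, (U v).Nonempty)
    (hfin : {v : Place K | U v ≠ localIntegers K v}.Finite) :
    {v : Place K | 0 ∉ U v}.Finite ∧
    {T : Set (Place K) |
        Sum.inl T ∈ Xi K '' {a : AdeleRing (𝓞 K) K | ∀ v : Place K, coord K a v ∈ U v}} =
      {T : Set (Place K) | T ∩ {v : Place K | 0 ∉ U v} = ∅} := by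
  refine ⟨hfin.subset fun v hv heq => hv (heq ▸ zero_mem_localIntegers v),
    Set.ext fun T => ⟨?_, fun hT => ?_⟩⟩
  · rintro ⟨a, haU, hXi⟩
    obtain ⟨-, rfl⟩ := Xi_eq_inl_iff.mp hXi
    exact Set.eq_empty_of_forall_notMem fun v ⟨hv0, hvF⟩ => hvF (hv0 ▸ haU v)
  · have hT' : ∀ v ∈ T, 0 ∈ U v := fun v hv => by_contra fun h => hT.subset ⟨hv, h⟩
    obtain ⟨a, haU, hzero, hsmall⟩ := exists_adele_mem_zeroSet_eq hopen hne hfin hT'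
    have hnu : ¬IsUnit a := AdeleRing.not_isUnit_of_infinite_setOf_valued_ne_one <|
      (hfin.preimage Sum.inr_injective.injOn).infinite_compl.mono fun w hw =>
        (hsmall w (not_not.mp hw)).ne
    exact ⟨a, haU, Xi_eq_inl_iff.mpr ⟨hnu, hzero⟩⟩
end
end

section
/- For every finite subset F ⊆ Σ_K, one has Ξ(∏_{v∈F} K_v^* × ∏_{v∉F} O_{K,v}) = U_F ⊔ C_K, where U_F := {T ⊆ Σ_K : T ∩ F = ∅}. Consequently, for every nonempty finite F ⊆ Σ_K, the set 2^{Σ_K}∖U_F is closed in (2^{Σ_K} ⊔ C_K, qo). -/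
open NumberField IsDedekindDomain

noncomputable section

variable (K : Type*) [Field K] [NumberField K]

/-!
An adele of the cylinder is either an idele, giving a point of `C_K`, or a non-unit whose zero
set misses `F`. Conversely, every idele class has a representative that is integral at all finite
places (clear its finitely many denominators by one global integer), and every `T` missing `F` is
the zero set of a non-unit of the cylinder: take `0` on `T`, `1` at the other infinite places and
a uniformizer at the other finite places, which is not an idele because there are infinitely many
finite places. For the closedness, the `Ξ`-preimage of `2^{Σ_K} ∖ U_F` is the finite union of the
closed sets `{a | a_v = 0}`, `v ∈ F`.
-/

open IsDedekindDomain.HeightOneSpectrum nonZeroDivisors WithZero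

theorem IsDedekindDomain.HeightOneSpectrum.infinite_of_isIntegral_int (S : Type*) [CommRing S]
    [Algebra.IsIntegral ℤ S] [FaithfulSMul ℤ S] : Infinite (HeightOneSpectrum S) := by
  have hover : ∀ p : {p : ℕ // p.Prime}, ∃ Q : Ideal S, Q.IsMaximal ∧
      Q.LiesOver (Ideal.span {((p : ℕ) : ℤ)}) := fun p =>
    have : Fact (p : ℕ).Prime := ⟨p.2⟩
    Ideal.exists_maximal_ideal_liesOver_of_isIntegral _
  choose Q hQmax hQover using hover
  have hcomap : ∀ p, (Q p).comap (algebraMap ℤ S) = Ideal.span {((p : ℕ) : ℤ)} :=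
    fun p => (hQover p).over.symm
  have hne_bot : ∀ p, Q p ≠ ⊥ := by
    intro p h
    have := hcomap p
    rw [h, ← RingHom.ker_eq_comap_bot, (RingHom.injective_iff_ker_eq_bot _).1
      (FaithfulSMul.algebraMap_injective ℤ S), eq_comm, Ideal.span_singleton_eq_bot] at this
    exact p.2.ne_zero (by exact_mod_cast this)
  have : Infinite {p : ℕ // p.Prime} := Nat.infinite_setOfPred_prime.to_subtype
  refine Infinite.of_injective (fun p => ⟨Q p, (hQmax p).isPrime, hne_bot p⟩) fun p q hpq => ?_
  have h := congrArg (fun v : HeightOneSpectrum S => v.asIdeal.comap (algebraMap ℤ S)) hpq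
  simp only [hcomap, Ideal.span_singleton_eq_span_singleton, Int.associated_iff_natAbs,
    Int.natAbs_natCast] at h
  exact Subtype.ext h

section DedekindDomain

variable {R L : Type*} [CommRing R] [IsDedekindDomain R] [Field L] [Algebra R L]
  [IsFractionRing R L]

namespace IsDedekindDomain.HeightOneSpectrum

variable (L) in
def adicUniformizer (v : HeightOneSpectrum R) : v.adicCompletion L :=
  (valuedAdicCompletion_surjective L v (exp (-1))).choose

theorem valued_adicUniformizer (v : HeightOneSpectrum R) :
    Valued.v (v.adicUniformizer L) = exp (-1) :=
  (valuedAdicCompletion_surjective L v (exp (-1))).choose_spec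

theorem adicUniformizer_ne_zero (v : HeightOneSpectrum R) : v.adicUniformizer L ≠ 0 :=
  (Valuation.ne_zero_iff Valued.v).1 (by rw [valued_adicUniformizer]; exact exp_ne_zero)

theorem adicUniformizer_mem_adicCompletionIntegers (v : HeightOneSpectrum R) :
    v.adicUniformizer L ∈ v.adicCompletionIntegers L := by
  rw [mem_adicCompletionIntegers, valued_adicUniformizer, ← exp_zero, exp_le_exp]
  norm_num

end IsDedekindDomain.HeightOneSpectrum

namespace IsDedekindDomain.FiniteAdeleRing

theorem not_isUnit_of_forall_valued_ne_one [Infinite (HeightOneSpectrum R)]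
    {a : FiniteAdeleRing R L} (ha : ∀ v, Valued.v (a v) ≠ 1) : ¬IsUnit a := fun hunit =>
  (isUnit_iff.1 hunit).2.exists.elim fun v hv => ha v hv

theorem exists_nonZeroDivisor_mul_mem_adicCompletionIntegers (a : FiniteAdeleRing R L) :
    ∃ b ∈ R⁰, ∀ v : HeightOneSpectrum R,
      (algebraMap R (FiniteAdeleRing R L) b * a) v ∈ v.adicCompletionIntegers L := by
  classical
  choose c hc hac using fun v : HeightOneSpectrum R =>
    adicCompletion.mul_nonZeroDivisor_mem_adicCompletionIntegers v (a v)
  have hS := Filter.eventually_cofinite.1 a.2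
  refine ⟨∏ v ∈ hS.toFinset, c v, prod_mem fun v _ => hc v, fun w => ?_⟩
  change algebraMap R (w.adicCompletion L) _ * a w ∈ _
  by_cases hw : w ∈ hS.toFinset
  · rw [← Finset.mul_prod_erase _ _ hw, map_mul, mul_right_comm,
      mul_comm (algebraMap R _ (c w))]
    exact mul_mem (hac w) (coe_mem_adicCompletionIntegers w _)
  · exact mul_mem (coe_mem_adicCompletionIntegers w _)
      (not_not.1 fun h => hw (hS.mem_toFinset.2 h))

end IsDedekindDomain.FiniteAdeleRing

end DedekindDomain

theorem coord_ne_zero_of_isUnit {a : AdeleRing (𝓞 K) K} (ha : IsUnit a) :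
    ∀ v : Place K, coord K a v ≠ 0
  | .inl w => ((ha.map (RingHom.fst _ _)).map (Pi.evalRingHom _ w)).ne_zero
  | .inr v => (FiniteAdeleRing.isUnit_iff.1 (ha.map (RingHom.snd _ _))).1 v

theorem zeroSet_inter_eq_empty_iff {a : AdeleRing (𝓞 K) K} {F : Set (Place K)} :
    zeroSet K a ∩ F = ∅ ↔ ∀ v ∈ F, coord K a v ≠ 0 := by
  simp [Set.eq_empty_iff_forall_notMem, zeroSet, imp_not_comm]

theorem Xi_of_isUnit {a : AdeleRing (𝓞 K) K} (ha : IsUnit a) :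
    Xi K a = Sum.inr (QuotientGroup.mk ha.unit) :=
  dif_pos ha

theorem Xi_of_not_isUnit {a : AdeleRing (𝓞 K) K} (ha : ¬IsUnit a) :
    Xi K a = Sum.inl (zeroSet K a) :=
  dif_neg ha

theorem Xi_mem_image_inl_iff {a : AdeleRing (𝓞 K) K} {S : Set (Set (Place K))} :
    Xi K a ∈ Sum.inl '' S ↔ ¬IsUnit a ∧ zeroSet K a ∈ S := by
  by_cases ha : IsUnit a
  · simp [Xi_of_isUnit K ha, ha]
  · simp [Xi_of_not_isUnit K ha, ha]

theorem isClosed_setOf_coord_eq_zero :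
    ∀ v : Place K, IsClosed {a : AdeleRing (𝓞 K) K | coord K a v = 0}
  | .inl w => show IsClosed {a : AdeleRing (𝓞 K) K | a.1 w = 0} from
      isClosed_eq ((continuous_apply w).comp continuous_fst) continuous_const
  | .inr v => show IsClosed {a : AdeleRing (𝓞 K) K | a.2 v = 0} from
      isClosed_eq ((RestrictedProduct.continuous_eval v).comp continuous_snd) continuous_const

theorem isClosed_image_inl_inter_ne_empty {F : Set (Place K)} (hF : F.Finite) :
    @IsClosed _ (qoTop K) (Sum.inl '' {T : Set (Place K) | T ∩ F ≠ ∅}) := by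
  have hpreimage :
      Xi K ⁻¹' (Sum.inl '' {T | T ∩ F ≠ ∅}) = ⋃ v ∈ F, {a | coord K a v = 0} := by
    ext a
    simp only [Set.mem_preimage, Xi_mem_image_inl_iff, Set.mem_ofPred_eq, Ne,
      zeroSet_inter_eq_empty_iff, Set.mem_iUnion, not_forall, not_not, exists_prop]
    exact ⟨And.right, fun ⟨v, hv, h0⟩ =>
      ⟨fun ha => coord_ne_zero_of_isUnit K ha v h0, v, hv, h0⟩⟩
  refine isClosed_coinduced.2 ?_
  rw [hpreimage]
  exact hF.isClosed_biUnion fun v _ => isClosed_setOf_coord_eq_zero K v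

open scoped Classical in
def zeroPatternAdele (T : Set (Place K)) : AdeleRing (𝓞 K) K :=
  (fun w => if .inl w ∈ T then 0 else 1,
   ⟨fun v => if .inr v ∈ T then 0 else v.adicUniformizer K, .of_forall fun v => by
      dsimp only
      split_ifs
      exacts [zero_mem _, v.adicUniformizer_mem_adicCompletionIntegers]⟩)

open scoped Classical in
theorem zeroPatternAdele_fst (T : Set (Place K)) (w : InfinitePlace K) :
    (zeroPatternAdele K T).1 w = if .inl w ∈ T then 0 else 1 :=
  rfl

open scoped Classical in
theorem zeroPatternAdele_snd (T : Set (Place K)) (v : HeightOneSpectrum (𝓞 K)) :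
    (zeroPatternAdele K T).2 v = if .inr v ∈ T then 0 else v.adicUniformizer K :=
  rfl

theorem zeroSet_zeroPatternAdele (T : Set (Place K)) : zeroSet K (zeroPatternAdele K T) = T := by
  ext (w | v)
  · change (zeroPatternAdele K T).1 w = 0 ↔ _
    rw [zeroPatternAdele_fst]
    split_ifs with h <;> simp [h]
  · change (zeroPatternAdele K T).2 v = 0 ↔ _
    rw [zeroPatternAdele_snd]
    split_ifs with h <;> simp [h, adicUniformizer_ne_zero]

theorem coord_zeroPatternAdele_mem_localIntegers (T : Set (Place K)) :
    ∀ v : Place K, coord K (zeroPatternAdele K T) v ∈ localIntegers K v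
  | .inl _ => Set.mem_univ _
  | .inr v => by
      change (zeroPatternAdele K T).2 v ∈ v.adicCompletionIntegers K
      rw [zeroPatternAdele_snd]
      split_ifs
      exacts [zero_mem _, v.adicUniformizer_mem_adicCompletionIntegers]

theorem not_isUnit_zeroPatternAdele (T : Set (Place K)) : ¬IsUnit (zeroPatternAdele K T) := by
  have := infinite_of_isIntegral_int (𝓞 K)
  refine fun ha => FiniteAdeleRing.not_isUnit_of_forall_valued_ne_one
    (a := (zeroPatternAdele K T).2) (fun v => ?_) (ha.map (RingHom.snd _ _))
  rw [zeroPatternAdele_snd]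
  split_ifs <;> simp [valued_adicUniformizer]

theorem exists_integral_rep (c : IdeleClassGroup K) :
    ∃ u : (AdeleRing (𝓞 K) K)ˣ, (u : IdeleClassGroup K) = c ∧
      ∀ v : Place K, coord K u v ∈ localIntegers K v := by
  obtain ⟨u, rfl⟩ := QuotientGroup.mk_surjective c
  obtain ⟨b, hb, hint⟩ := FiniteAdeleRing.exists_nonZeroDivisor_mul_mem_adicCompletionIntegers
    (u : AdeleRing (𝓞 K) K).2
  let x : Kˣ := Units.mk0 (algebraMap (𝓞 K) K b)
    (IsFractionRing.to_map_ne_zero_of_mem_nonZeroDivisors hb)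
  let p := Units.map (algebraMap K (AdeleRing (𝓞 K) K)).toMonoidHom x
  have hp : (p : IdeleClassGroup K) = 1 := (QuotientGroup.eq_one_iff p).2 ⟨x, rfl⟩
  refine ⟨p * u, by rw [QuotientGroup.mk_mul, hp]; exact one_mul (u : IdeleClassGroup K), ?_⟩
  rintro (w | v)
  exacts [Set.mem_univ _, hint v]

/-- `Ξ(∏_{v∈F} K_v^* × ∏_{v∉F} O_{K,v}) = U_F ⊔ C_K`; consequently, for nonempty finite `F`,
the set `2^{Σ_K} ∖ U_F` is closed in `(2^{Σ_K} ⊔ C_K, qo)`. -/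
theorem xi_image_unitsCylinder (F : Finset (Place K)) :
    Xi K '' {a : AdeleRing (𝓞 K) K | (∀ v ∈ F, coord K a v ≠ 0) ∧
        ∀ v : Place K, v ∉ F → coord K a v ∈ localIntegers K v} =
      Sum.inl '' {T : Set (Place K) | T ∩ ↑F = ∅} ∪ Set.range Sum.inr ∧
    (F.Nonempty →
      @IsClosed _ (qoTop K) (Sum.inl '' {T : Set (Place K) | T ∩ ↑F ≠ ∅})) := by
  refine ⟨?_, fun _ => isClosed_image_inl_inter_ne_empty K F.finite_toSet⟩
  ext y
  constructor
  · rintro ⟨a, ⟨hF, -⟩, rfl⟩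
    by_cases ha : IsUnit a
    · exact .inr ⟨_, (Xi_of_isUnit K ha).symm⟩
    · exact .inl ((Xi_mem_image_inl_iff K).2 ⟨ha, (zeroSet_inter_eq_empty_iff K).2 hF⟩)
  · rintro (⟨T, hT, rfl⟩ | ⟨c, rfl⟩)
    · have hcoord : ∀ v ∈ F, coord K (zeroPatternAdele K T) v ≠ 0 :=
        (zeroSet_inter_eq_empty_iff K).1 (by rwa [zeroSet_zeroPatternAdele])
      refine ⟨zeroPatternAdele K T,
        ⟨hcoord, fun v _ => coord_zeroPatternAdele_mem_localIntegers K T v⟩, ?_⟩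
      rw [Xi_of_not_isUnit K (not_isUnit_zeroPatternAdele K T), zeroSet_zeroPatternAdele]
    · obtain ⟨u, rfl, hu⟩ := exists_integral_rep K c
      refine ⟨u, ⟨fun v _ => coord_ne_zero_of_isUnit K u.isUnit v, fun v _ => hu v⟩, ?_⟩
      rw [Xi_of_isUnit K u.isUnit, IsUnit.unit_of_val_units]

end
end

section
/- For every a ∈ A_K, ‖a‖ > 0 if and only if a is invertible in A_K (i.e., a ∈ A_K^*). Consequently, A_K^ε ⊆ A_K^* for every ε > 0. -/
open NumberField IsDedekindDomain

noncomputable section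

variable (K : Type*) [Field K] [NumberField K]

/-!
The adelic norm is the infimum of the partial products of `|a|_v`. If `a` is an idele then
`|a|_v = 1` for almost all `v`, so every partial product is bounded below by the product of
`min (|a|_v, 1)` over the finitely many exceptional places. Conversely, if `‖a‖ > 0` then no
coordinate of `a` vanishes, and only finitely many `|a|_v` can be `≤ 1/2`, since otherwise partial
products would tend to `0`. As `|a|_v < 1` at a finite place forces `|a|_v ≤ N(v)⁻¹ ≤ 1/2`, the
component `a_v` is a unit of `O_v` for almost all `v`, i.e. `a` is an idele.
-/

section PartialProducts

variable {ι : Type*} {f : ι → ℝ}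

def partialProducts (f : ι → ℝ) : Set ℝ :=
  {r | ∃ F : Finset ι, (∀ i, 1 < f i → i ∈ F) ∧ r = ∏ i ∈ F, f i}

lemma bddBelow_partialProducts (hf : ∀ i, 0 ≤ f i) : BddBelow (partialProducts f) :=
  ⟨0, by rintro _ ⟨F, -, rfl⟩; exact Finset.prod_nonneg fun i _ ↦ hf i⟩

lemma partialProducts_nonempty_of_sInf_pos (h : 0 < sInf (partialProducts f)) :
    (partialProducts f).Nonempty :=
  Set.nonempty_iff_ne_empty.2 fun hP ↦ by simp [hP] at h

lemma ne_zero_of_sInf_partialProducts_pos (hf : ∀ i, 0 ≤ f i)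
    (h : 0 < sInf (partialProducts f)) (i : ι) : f i ≠ 0 := by
  classical
  intro hi
  obtain ⟨_, F, hF, rfl⟩ := partialProducts_nonempty_of_sInf_pos h
  have hmem : ∏ j ∈ insert i F, f j ∈ partialProducts f :=
    ⟨insert i F, fun j hj ↦ Finset.mem_insert_of_mem (hF j hj), rfl⟩
  have hzero : ∏ j ∈ insert i F, f j = 0 := Finset.prod_eq_zero (Finset.mem_insert_self i F) hi
  linarith [csInf_le (bddBelow_partialProducts hf) hmem]

lemma finite_setOf_le_of_sInf_partialProducts_pos (hf : ∀ i, 0 ≤ f i)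
    (h : 0 < sInf (partialProducts f)) {δ : ℝ} (hδ : δ < 1) : {i | f i ≤ δ}.Finite := by
  classical
  by_contra hinf
  set m := sInf (partialProducts f)
  obtain ⟨_, F, hF, rfl⟩ := partialProducts_nonempty_of_sInf_pos h
  set B := ∏ i ∈ F, f i
  have hB : 0 < B := h.trans_le (csInf_le (bddBelow_partialProducts hf) ⟨F, hF, rfl⟩)
  obtain ⟨n, hn⟩ : ∃ n : ℕ, δ ^ n < m / B := exists_pow_lt_of_lt_one (div_pos h hB) hδ
  obtain ⟨G, hGδ, hGcard⟩ := (Set.Infinite.sdiff hinf F.finite_toSet).exists_subset_card_eq n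
  have hFG : Disjoint F G := Finset.disjoint_right.2 fun i hi ↦ (hGδ hi).2
  have hmem : ∏ i ∈ F ∪ G, f i ∈ partialProducts f :=
    ⟨F ∪ G, fun i hi ↦ Finset.mem_union_left G (hF i hi), rfl⟩
  have hG : ∏ i ∈ G, f i ≤ δ ^ n := by
    calc ∏ i ∈ G, f i ≤ ∏ _i ∈ G, δ :=
          Finset.prod_le_prod (fun i _ ↦ hf i) fun i hi ↦ (hGδ hi).1
      _ = δ ^ n := by rw [Finset.prod_const, hGcard]
  have : m < m :=
    calc m ≤ ∏ i ∈ F ∪ G, f i := csInf_le (bddBelow_partialProducts hf) hmem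
      _ = B * ∏ i ∈ G, f i := Finset.prod_union hFG
      _ ≤ B * δ ^ n := by gcongr
      _ < m := (lt_div_iff₀' hB).1 hn
  exact lt_irrefl m this

lemma sInf_partialProducts_pos (hf : ∀ i, 0 < f i) (hfin : {i | f i ≠ 1}.Finite) :
    0 < sInf (partialProducts f) := by
  classical
  set T := hfin.toFinset
  have hne : (partialProducts f).Nonempty :=
    ⟨_, T, fun i hi ↦ hfin.mem_toFinset.2 hi.ne', rfl⟩
  refine (Finset.prod_pos (s := T) fun i _ ↦ lt_min (hf i) one_pos).trans_le (le_csInf hne ?_)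
  rintro _ ⟨F, -, rfl⟩
  have hmin_nonneg : ∀ i, 0 ≤ min (f i) 1 := fun i ↦ le_min (hf i).le zero_le_one
  calc ∏ i ∈ T, min (f i) 1 = ∏ i ∈ F ∪ T, min (f i) 1 :=
        Finset.prod_subset Finset.subset_union_right fun i _ hi ↦ by
          rw [show f i = 1 by simpa [T] using hi, min_self]
    _ ≤ ∏ i ∈ F, min (f i) 1 :=
        Finset.prod_le_prod_of_subset_of_le_one Finset.subset_union_left
          (fun i _ ↦ hmin_nonneg i) fun i _ _ ↦ min_le_right _ _
    _ ≤ ∏ i ∈ F, f i :=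
        Finset.prod_le_prod (fun i _ ↦ hmin_nonneg i) fun i _ ↦ min_le_left _ _

theorem sInf_partialProducts_pos_iff (hf : ∀ i, 0 ≤ f i) {δ : ℝ} (hδ : δ < 1)
    (hgap : {i | δ < f i ∧ f i < 1}.Finite) :
    0 < sInf (partialProducts f) ↔ (∀ i, f i ≠ 0) ∧ {i | f i ≠ 1}.Finite := by
  refine ⟨fun h ↦ ⟨ne_zero_of_sInf_partialProducts_pos hf h, ?_⟩,
    fun ⟨h0, hfin⟩ ↦ sInf_partialProducts_pos (fun i ↦ (hf i).lt_of_ne' (h0 i)) hfin⟩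
  obtain ⟨_, F, hF, -⟩ := partialProducts_nonempty_of_sInf_pos h
  refine ((F.finite_toSet.union (finite_setOf_le_of_sInf_partialProducts_pos hf h hδ)).union
    hgap).subset fun i hi ↦ ?_
  rcases lt_or_gt_of_ne hi with hlt | hgt
  · rcases le_or_gt (f i) δ with hle | hδlt
    · exact Or.inl (Or.inr hle)
    · exact Or.inr ⟨hδlt, hlt⟩
  · exact Or.inl (Or.inl (hF i hgt))

end PartialProducts

section AdelicNorm

variable {K}

theorem placeAbs_inr_eq_norm (v : HeightOneSpectrum (𝓞 K)) (x : v.adicCompletion K) :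
    placeAbs K (.inr v) x = ‖x‖ := by
  rw [FinitePlace.norm_def]
  by_cases hx : Valued.v x = 0
  · simp [placeAbs, hx]
  · simp [placeAbs, hx, WithZeroMulInt.toNNReal_neg_apply, Ideal.absNorm_apply,
      Submodule.cardQuot_apply]

theorem IsDedekindDomain.HeightOneSpectrum.norm_le_inv_absNorm_of_norm_lt_one {v : HeightOneSpectrum (𝓞 K)}
    {x : v.adicCompletion K} (hx : ‖x‖ < 1) : ‖x‖ ≤ (Ideal.absNorm v.asIdeal : ℝ)⁻¹ := by
  rcases eq_or_ne x 0 with rfl | hx0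
  · simp
  have hv0 : Valued.v x ≠ 0 := by simpa using hx0
  rw [Valued.toNormedField.norm_lt_one_iff] at hx
  have hlog : WithZero.log (Valued.v x) ≤ -1 := by
    have := (WithZero.log_lt_iff_lt_exp hv0 (a := 0)).2 (by simpa using hx)
    omega
  rw [FinitePlace.norm_def, WithZeroMulInt.toNNReal_neg_apply _ hv0, WithZero.toAdd_unzero_eq_log]
  push_cast
  rw [← zpow_neg_one]
  exact zpow_le_zpow_right₀ (by exact_mod_cast (HeightOneSpectrum.one_lt_absNorm v).le) hlog

theorem IsDedekindDomain.HeightOneSpectrum.norm_eq_one_iff {v : HeightOneSpectrum (𝓞 K)} {x : v.adicCompletion K} :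
    ‖x‖ = 1 ↔ Valued.v x = 1 := by
  simp only [le_antisymm_iff, Valued.toNormedField.norm_le_one_iff,
    Valued.toNormedField.one_le_norm_iff]

open scoped Classical in
theorem adeleAbs_inl (a : AdeleRing (𝓞 K) K) (w : InfinitePlace K) :
    adeleAbs K (.inl w) a = if w.IsReal then ‖a.1 w‖ else ‖a.1 w‖ ^ 2 :=
  rfl

theorem adeleAbs_inr (a : AdeleRing (𝓞 K) K) (v : HeightOneSpectrum (𝓞 K)) :
    adeleAbs K (.inr v) a = ‖a.2 v‖ :=
  placeAbs_inr_eq_norm v (a.2 v)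

theorem adeleAbs_nonneg (a : AdeleRing (𝓞 K) K) : ∀ v, 0 ≤ adeleAbs K v a
  | .inl w => by rw [adeleAbs_inl]; split_ifs <;> positivity
  | .inr v => by rw [adeleAbs_inr]; positivity

theorem adeleAbs_inl_eq_zero_iff (a : AdeleRing (𝓞 K) K) (w : InfinitePlace K) :
    adeleAbs K (.inl w) a = 0 ↔ a.1 w = 0 := by
  rw [adeleAbs_inl]; split_ifs <;> simp

theorem adelicNorm_eq_sInf_partialProducts (a : AdeleRing (𝓞 K) K) :
    adelicNorm K a = sInf (partialProducts (adeleAbs K · a)) := rfl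

theorem finite_setOf_adeleAbs_mem_Ioo (a : AdeleRing (𝓞 K) K) :
    {v | 1 / 2 < adeleAbs K v a ∧ adeleAbs K v a < 1}.Finite := by
  refine (Set.finite_range Sum.inl).subset ?_
  rintro (w | v) ⟨hhalf, hlt⟩
  · exact ⟨w, rfl⟩
  · rw [adeleAbs_inr] at hhalf hlt
    have hN : (2 : ℝ) ≤ Ideal.absNorm v.asIdeal := by
      exact_mod_cast HeightOneSpectrum.one_lt_absNorm v
    have := (HeightOneSpectrum.norm_le_inv_absNorm_of_norm_lt_one hlt).trans
      (inv_anti₀ two_pos hN)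
    linarith

theorem isUnit_iff_adeleAbs (a : AdeleRing (𝓞 K) K) :
    IsUnit a ↔ (∀ v, adeleAbs K v a ≠ 0) ∧ {v | adeleAbs K v a ≠ 1}.Finite := by
  rw [show IsUnit a ↔ IsUnit a.1 ∧ IsUnit a.2 from Prod.isUnit_iff,
    show IsUnit a.1 ↔ ∀ w, IsUnit (a.1 w) from Pi.isUnit_iff, FiniteAdeleRing.isUnit_iff, Sum.forall,
    ← Set.finite_preimage_inl_and_inr]
  simp only [isUnit_iff_ne_zero, ne_eq, adeleAbs_inl_eq_zero_iff, Set.preimage_ofPred_eq,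
    adeleAbs_inr, norm_eq_zero, HeightOneSpectrum.norm_eq_one_iff, Filter.eventually_cofinite,
    Set.toFinite, true_and, and_assoc]

theorem adelicNorm_pos_iff (a : AdeleRing (𝓞 K) K) : 0 < adelicNorm K a ↔ IsUnit a := by
  rw [adelicNorm_eq_sInf_partialProducts, isUnit_iff_adeleAbs]
  exact sInf_partialProducts_pos_iff (adeleAbs_nonneg a) (by norm_num)
    (finite_setOf_adeleAbs_mem_Ioo a)

end AdelicNorm

/-- For every `a ∈ A_K`, `‖a‖ > 0` iff `a` is invertible in `A_K`; consequently
`A_K^ε ⊆ A_K^*` for every `ε > 0`. -/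
theorem adelicNorm_pos_iff_isUnit :
    (∀ a : AdeleRing (𝓞 K) K, 0 < adelicNorm K a ↔ IsUnit a) ∧
    ∀ ε : ℝ, 0 < ε →
      {a : AdeleRing (𝓞 K) K | ε ≤ adelicNorm K a} ⊆ {a : AdeleRing (𝓞 K) K | IsUnit a} :=
  ⟨adelicNorm_pos_iff, fun _ hε _ ha ↦ (adelicNorm_pos_iff _).1 (hε.trans_le ha)⟩

end
end

section
/- Let X be either ℝ/{±1} (with X^* := ℝ^*/{±1}) or ℂ/μ for a finite subgroup μ of the circle group (with X^* := ℂ^*/μ), and let Γ be a free abelian subgroup of the multiplicative group X^*, acting on X by multiplication (call this action γ). Then γ is homotopic to the trivial action: there exists a family (γ^t)_{t∈[0,1]} of actions of Γ on X by homeomorphisms such that γ^1 = γ, γ^0 is the trivial action, and for each s ∈ Γ the map [0,1] × X → X, (t,x) ↦ γ^t_s(x), is continuous. -/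
noncomputable section

/-- The multiplicative congruence on a commutative monoid `𝕜` identifying `x` and `y` when
they differ by multiplication by an element of the subgroup `μ ≤ 𝕜ˣ`. Its quotient
`(muCon 𝕜 μ).Quotient` is the space `X = 𝕜/μ` (the quotient of `𝕜` by the multiplication
action of `μ`), which is a commutative monoid and carries the quotient topology. -/
def muCon (𝕜 : Type*) [CommMonoid 𝕜] (μ : Subgroup 𝕜ˣ) : Con 𝕜 where
  r x y := ∃ m : μ, ((m : 𝕜ˣ) : 𝕜) * y = x
  iseqv := {
    refl := fun x => ⟨1, one_mul x⟩
    symm := by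
      rintro x y ⟨m, rfl⟩
      exact ⟨m⁻¹, by
        rw [← mul_assoc, ← Units.val_mul]
        norm_cast
        rw [inv_mul_cancel]
        simp⟩
    trans := by
      rintro x y z ⟨m₁, rfl⟩ ⟨m₂, rfl⟩
      exact ⟨m₁ * m₂, by
        rw [← mul_assoc, ← Units.val_mul]
        norm_cast⟩ }
  mul' := by
    rintro w x y z ⟨m₁, rfl⟩ ⟨m₂, rfl⟩
    exact ⟨m₁ * m₂, by
      push_cast
      rw [mul_mul_mul_comm]⟩

instance (𝕜 : Type*) [CommMonoid 𝕜] [TopologicalSpace 𝕜] (μ : Subgroup 𝕜ˣ) :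
    TopologicalSpace (muCon 𝕜 μ).Quotient :=
  instTopologicalSpaceQuotient

/-- The statement, for the quotient `X = 𝕜/μ` with `X^* = Xˣ` (the multiplicative group of
`X`, which is the image of the invertible elements of `𝕜`): for every free abelian subgroup
`Γ ≤ X^*`, the multiplication action `γ` of `Γ` on `X` is homotopic to the trivial action,
i.e. there are actions `γ^t` (`t ∈ [0,1]`) of `Γ` on `X` by homeomorphisms with `γ^1 = γ`,
`γ^0` trivial, such that for each `s ∈ Γ` the map `(t, x) ↦ γ^t_s(x)` is continuous. -/
def MulActionHomotopicToTrivial (𝕜 : Type*) [CommMonoid 𝕜] [TopologicalSpace 𝕜]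
    (μ : Subgroup 𝕜ˣ) : Prop :=
  ∀ Γ : Subgroup ((muCon 𝕜 μ).Quotient)ˣ, Module.Free ℤ (Additive Γ) →
    ∃ H : Γ → Set.Icc (0 : ℝ) 1 → (muCon 𝕜 μ).Quotient → (muCon 𝕜 μ).Quotient,
      (∀ t x, H 1 t x = x) ∧
      (∀ s₁ s₂ t x, H (s₁ * s₂) t x = H s₁ t (H s₂ t x)) ∧
      (∀ s t, Continuous (H s t)) ∧
      (∀ s, Continuous fun p : Set.Icc (0 : ℝ) 1 × (muCon 𝕜 μ).Quotient =>
        H s p.1 p.2) ∧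
      (∀ s x, H s 1 x = (((s : ((muCon 𝕜 μ).Quotient)ˣ) : (muCon 𝕜 μ).Quotient)) * x) ∧
      (∀ s x, H s 0 x = x)

/-! A free abelian group `Γ ≤ X^*` lifts along the exponential, `exp ∘ f = id` for some
homomorphism `f : Γ → V` into the real vector space `V = ℝ` or `ℂ` (every unit of `X` is the
class of some `exp v`, and a basis of `Γ` may be lifted freely). Scaling the logarithms,
`γ^t_s x = exp (t • f s) · x` is then an action for each `t`, trivial at `t = 0` and equal to
`γ` at `t = 1`. -/

theorem AddMonoidHom.exists_comp_eq_of_free {G M V : Type*} [AddCommGroup G] [Module.Free ℤ G]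
    [AddMonoid M] [AddCommGroup V] (e : V →+ M) (ρ : G →+ M) (h : ∀ g, ρ g ∈ Set.range e) :
    ∃ f : G →+ V, e.comp f = ρ := by
  let B := Module.Free.chooseBasis ℤ G
  choose v hv using fun i => h (B i)
  refine ⟨(B.constr ℤ v).toAddMonoidHom, AddMonoidHom.eq_of_eqOn_dense (s := Set.range B) ?_ ?_⟩
  · rw [← Submodule.span_int_eq_addSubgroupClosure, B.span_eq]
    rfl
  · rintro _ ⟨i, rfl⟩
    simp [B.constr_basis, hv]

namespace muCon

variable {𝕜 : Type*} [CommMonoid 𝕜] (μ : Subgroup 𝕜ˣ)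

-- `muCon 𝕜 μ` is definitionally the orbit relation of `μ` acting on `𝕜`.
theorem isOpenQuotientMap_mk [TopologicalSpace 𝕜] [ContinuousMul 𝕜] :
    IsOpenQuotientMap ((↑) : 𝕜 → (muCon 𝕜 μ).Quotient) :=
  ⟨Quotient.mk''_surjective, continuous_quotient_mk', isOpenMap_quotient_mk'_mul (Γ := μ)⟩

instance [TopologicalSpace 𝕜] [ContinuousMul 𝕜] : ContinuousMul (muCon 𝕜 μ).Quotient := by
  have hq := (isOpenQuotientMap_mk μ).prodMap (isOpenQuotientMap_mk μ)
  exact ⟨hq.isQuotientMap.continuous_iff.mpr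
    ((isOpenQuotientMap_mk μ).continuous.comp continuous_mul)⟩

theorem unitsMap_mk'_surjective : Function.Surjective (Units.map (muCon 𝕜 μ).mk') := by
  intro u
  obtain ⟨a, ha⟩ := (muCon 𝕜 μ).mk'_surjective u
  obtain ⟨b, hb⟩ := (muCon 𝕜 μ).mk'_surjective ↑u⁻¹
  obtain ⟨m, hm⟩ : muCon 𝕜 μ (a * b) 1 := by
    rw [← Con.eq, Con.coe_mul]
    simp_all
  have hunit : IsUnit a := IsUnit.of_mul_eq_one (b * ((m⁻¹ : 𝕜ˣ) : 𝕜)) <| by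
    rw [← mul_assoc, ← hm, mul_one, Units.mul_inv]
  exact ⟨hunit.unit, Units.ext ha⟩

theorem coe_abs (a : ℝ) : ((|a| : ℝ) : (muCon ℝ (Subgroup.zpowers (-1 : ℝˣ))).Quotient) = a := by
  rcases abs_choice a with h | h
  · rw [h]
  · exact (Con.eq _).mpr ⟨⟨-1, Subgroup.mem_zpowers _⟩, by simp [h]⟩

end muCon

theorem mulActionHomotopicToTrivial_of_continuous_monoidHom {𝕜 : Type*} [CommMonoid 𝕜]
    [TopologicalSpace 𝕜] [ContinuousMul 𝕜] {μ : Subgroup 𝕜ˣ}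
    {V : Type*} [AddCommGroup V] [Module ℝ V] [TopologicalSpace V] [ContinuousSMul ℝ V]
    (φ : Multiplicative V →* (muCon 𝕜 μ).Quotient) (hφ : Continuous φ)
    (hφ_units : ∀ u : ((muCon 𝕜 μ).Quotient)ˣ, (u : (muCon 𝕜 μ).Quotient) ∈ Set.range φ) :
    MulActionHomotopicToTrivial 𝕜 μ := by
  intro Γ _
  obtain ⟨f, hf⟩ := AddMonoidHom.exists_comp_eq_of_free (MonoidHom.toAdditiveRight φ)
    ((Units.coeHom _).comp Γ.subtype).toAdditive fun s => by
      obtain ⟨v, hv⟩ := hφ_units s.toMul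
      exact ⟨v.toAdd, congrArg Additive.ofMul hv⟩
  have hφf (s : Γ) :
      φ (.ofAdd (f (.ofMul s))) = ((s : (muCon 𝕜 μ).Quotientˣ) : (muCon 𝕜 μ).Quotient) :=
    congrArg Additive.toMul (DFunLike.congr_fun hf (.ofMul s))
  refine ⟨fun s t x => φ (.ofAdd ((t : ℝ) • f (.ofMul s))) * x, ?_, ?_, ?_, ?_, ?_, ?_⟩
  · simp
  · intro s₁ s₂ t x
    simp [smul_add, mul_assoc]
  · exact fun s t => continuous_const_mul _
  · intro s
    have hpath : Continuous fun t : Set.Icc (0 : ℝ) 1 => φ (.ofAdd ((t : ℝ) • f (.ofMul s))) :=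
      hφ.comp (continuous_ofAdd.comp (continuous_subtype_val.smul continuous_const))
    exact hpath.fst'.mul continuous_snd
  · simp [hφf]
  · simp

theorem mulActionHomotopicToTrivial_real :
    MulActionHomotopicToTrivial ℝ (Subgroup.zpowers (-1 : ℝˣ)) := by
  refine mulActionHomotopicToTrivial_of_continuous_monoidHom ((Con.mk' _).comp Real.expMonoidHom)
    ((muCon.isOpenQuotientMap_mk _).continuous.comp Real.continuous_exp) fun u => ?_
  obtain ⟨a, rfl⟩ := muCon.unitsMap_mk'_surjective _ u
  refine ⟨.ofAdd (Real.log |(a : ℝ)|), ?_⟩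
  change ((Real.exp (Real.log |(a : ℝ)|) : ℝ) : (muCon ℝ _).Quotient) = a
  rw [Real.exp_log (abs_pos.mpr a.ne_zero), muCon.coe_abs]

theorem mulActionHomotopicToTrivial_complex (μ : Subgroup ℂˣ) :
    MulActionHomotopicToTrivial ℂ μ := by
  refine mulActionHomotopicToTrivial_of_continuous_monoidHom ((Con.mk' _).comp Complex.expMonoidHom)
    ((muCon.isOpenQuotientMap_mk _).continuous.comp Complex.continuous_exp) fun u => ?_
  obtain ⟨a, rfl⟩ := muCon.unitsMap_mk'_surjective _ u
  exact ⟨.ofAdd (Complex.log a), by simp [Complex.exp_log a.ne_zero]⟩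

/-- Let `X` be either `ℝ/{±1}` (with `X^* = ℝ^*/{±1}`) or `ℂ/μ` for a finite subgroup `μ`
of the circle group (with `X^* = ℂ^*/μ`), and let `Γ` be a free abelian subgroup of the
multiplicative group `X^*`, acting on `X` by multiplication. Then this action is homotopic
to the trivial action. -/
theorem mulAction_homotopicToTrivial_real_complex :
    MulActionHomotopicToTrivial ℝ (Subgroup.zpowers (-1 : ℝˣ)) ∧
    ∀ μ : Subgroup ℂˣ, (μ : Set ℂˣ).Finite → (∀ z ∈ μ, ‖(z : ℂ)‖ = 1) →
      MulActionHomotopicToTrivial ℂ μ :=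
  ⟨mulActionHomotopicToTrivial_real, fun μ _ _ => mulActionHomotopicToTrivial_complex μ⟩
end
end
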